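/- Let Q = ABCD be a quadrilateral in ℝ² whose diagonal AC passes through the midpoint E of the diagonal BD. Then the midpoint p of AC satisfies: the four triangles ABp, BCp, CDp, DAp all have equal area, each equal to Vol₂(Q)/4. -/

import Mathlib

open MeasureTheory

/-- Twice-signed-area determinant of the pair of planar vectors `u`, `v`. -/
noncomputable def det2 (u v : EuclideanSpace ℝ (Fin 2)) : ℝ :=
  u 0 * v 1 - u 1 * v 0

/-- Area of the triangle with vertices `X Y Z ⊂ ℝ²`. -/
noncomputable def triArea (X Y Z : EuclideanSpace ℝ (Fin 2)) : ℝ :=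
  |det2 (Y - X) (Z - X)| / 2

/-!
The affine map `x ↦ A + x 0 • (B - A) + x 1 • (C - A)` carries the unit right triangle, of area
`1/2` by Fubini, onto `ABC` and scales volume by `|det2 (B - A) (C - A)|`; so the Lebesgue measure
of `ABC` is `triArea A B C`, and `Vol₂(Q) = triArea A B C + triArea A C D` since the two triangles
overlap in a null set. Because `AC` passes through the midpoint of `BD`, `D - A` is congruent to
`-(B - A)` modulo `C - A`, hence `ABC` and `ACD` have the same area. Finally each median from `B`
or `D` to the midpoint `p` of `AC` halves its triangle.
-/

open Set Pointwise

local notation "ℝ²" => EuclideanSpace ℝ (Fin 2)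

theorem volume_region_between_cc_eq_lintegral {α : Type*} [MeasurableSpace α] {μ : Measure α}
    {f g : α → ℝ} {s : Set α} (hf : Measurable f) (hg : Measurable g) (hs : MeasurableSet s) :
    μ.prod volume {p : α × ℝ | p.1 ∈ s ∧ p.2 ∈ Icc (f p.1) (g p.1)} =
      ∫⁻ x in s, ENNReal.ofReal (g x - f x) ∂μ := by
  classical
  rw [Measure.prod_apply (measurableSet_region_between_cc hf hg hs), ← lintegral_indicator hs]
  congr 1 with x
  by_cases hx : x ∈ s
  · simp only [preimage_ofPred_eq, hx, true_and, indicator_of_mem]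
    exact Real.volume_Icc
  · simp [hx]

theorem volume_triangle_prod :
    volume {p : ℝ × ℝ | p.1 ∈ Icc 0 1 ∧ p.2 ∈ Icc 0 (1 - p.1)} = ENNReal.ofReal (1 / 2) := by
  rw [Measure.volume_eq_prod,
    volume_region_between_cc_eq_lintegral (f := fun _ => 0) (g := fun x => 1 - x)
      measurable_const (measurable_const.sub measurable_id) measurableSet_Icc,
    ← ofReal_integral_eq_lintegral_ofReal]
  · rw [integral_Icc_eq_integral_Ioc, ← intervalIntegral.integral_of_le zero_le_one]
    simp only [sub_zero]
    rw [intervalIntegral.integral_sub intervalIntegrable_const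
      intervalIntegral.intervalIntegrable_id, integral_id, intervalIntegral.integral_const]
    norm_num
  · exact Continuous.integrableOn_Icc (by fun_prop)
  · filter_upwards [ae_restrict_mem measurableSet_Icc] with x hx
    simpa using hx.2

theorem convexHull_zero_single_single :
    convexHull ℝ {0, EuclideanSpace.single 0 1, EuclideanSpace.single 1 1} =
      {x : ℝ² | x 0 ∈ Icc 0 1 ∧ x 1 ∈ Icc 0 (1 - x 0)} := by
  refine Subset.antisymm (convexHull_min ?_ ?_) fun x ⟨⟨h0, _⟩, h1, h2⟩ => ?_
  · rintro x (rfl | rfl | rfl) <;> simp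
  · rintro x ⟨⟨hx0, -⟩, hx1, hx2⟩ y ⟨⟨hy0, -⟩, hy1, hy2⟩ a b ha hb hab
    simp only [mem_ofPred_eq, mem_Icc, PiLp.add_apply, PiLp.smul_apply, smul_eq_mul]
    refine ⟨⟨by positivity, ?_⟩, by positivity, ?_⟩ <;>
      linarith [mul_le_mul_of_nonneg_left hx2 ha, mul_le_mul_of_nonneg_left hy2 hb,
        mul_nonneg ha hx1, mul_nonneg hb hy1]
  · have hx : x = ∑ i, ![1 - x 0 - x 1, x 0, x 1] i •
        ![0, EuclideanSpace.single 0 1, EuclideanSpace.single 1 1] i := by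
      ext i; fin_cases i <;> simp [Fin.sum_univ_three]
    rw [hx]
    refine (convex_convexHull ℝ _).sum_mem (fun i _ => ?_) ?_
      (fun i _ => subset_convexHull ℝ _ ?_)
    · fin_cases i <;>
        simp only [Fin.zero_eta, Fin.mk_one, Fin.reduceFinMk, Matrix.cons_val] <;> linarith
    · simp only [Fin.sum_univ_three, Matrix.cons_val]; ring
    · fin_cases i <;> simp

theorem volume_convexHull_zero_single_single :
    volume (convexHull ℝ {0, EuclideanSpace.single 0 1, EuclideanSpace.single 1 1} : Set ℝ²) =
      ENNReal.ofReal (1 / 2) := by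
  have hT : MeasurableSet {p : ℝ × ℝ | p.1 ∈ Icc 0 1 ∧ p.2 ∈ Icc 0 (1 - p.1)} :=
    measurableSet_region_between_cc measurable_const (measurable_const.sub measurable_id)
      measurableSet_Icc
  rw [convexHull_zero_single_single, ← volume_triangle_prod]
  exact ((volume_preserving_finTwoArrow ℝ).comp
    (EuclideanSpace.volume_preserving_symm_measurableEquiv_toLp (Fin 2))).measure_preimage
      hT.nullMeasurableSet

theorem volume_convexHull_triangle (A B C : ℝ²) :
    volume (convexHull ℝ {A, B, C}) = ENNReal.ofReal (triArea A B C) := by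
  set L := Matrix.toLpLin 2 2 !![(B - A) 0, (C - A) 0; (B - A) 1, (C - A) 1]
  have hL0 : L (EuclideanSpace.single 0 1) = B - A := by
    ext i; fin_cases i <;> simp [L, Matrix.toLpLin_apply]
  have hL1 : L (EuclideanSpace.single 1 1) = C - A := by
    ext i; fin_cases i <;> simp [L, Matrix.toLpLin_apply]
  have hhull : convexHull ℝ {A, B, C} =
      A +ᵥ L '' convexHull ℝ {0, EuclideanSpace.single 0 1, EuclideanSpace.single 1 1} := by
    rw [L.image_convexHull, ← convexHull_vadd]
    simp [image_insert_eq, hL0, hL1, vadd_set_insert]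
  rw [hhull, measure_vadd, Measure.addHaar_image_linearMap, LinearMap.det_toLpLin,
    volume_convexHull_zero_single_single, ← ENNReal.ofReal_mul (abs_nonneg _)]
  congr 1
  rw [Matrix.det_fin_two_of, triArea, det2, mul_one_div, mul_comm ((C - A) 0)]

theorem EuclideanSpace.midpoint_apply {ι : Type*} (X Y : EuclideanSpace ℝ ι) (i : ι) :
    midpoint ℝ X Y i = (X i + Y i) / 2 := by
  simp only [midpoint_eq_smul_add, invOf_eq_inv, smul_add, PiLp.add_apply, PiLp.smul_apply,
    smul_eq_mul]
  ring

theorem triArea_nonneg (A B C : ℝ²) : 0 ≤ triArea A B C := by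
  unfold triArea; positivity

theorem triArea_rotate (A B C : ℝ²) : triArea B C A = triArea A B C := by
  simp only [triArea, det2, PiLp.sub_apply]
  congr 2
  ring

theorem triArea_midpoint_left (A B C : ℝ²) :
    triArea A B (midpoint ℝ A C) = triArea A B C / 2 := by
  have hdet : det2 (B - A) (midpoint ℝ A C - A) = det2 (B - A) (C - A) / 2 := by
    simp only [det2, PiLp.sub_apply, EuclideanSpace.midpoint_apply]; ring
  rw [triArea, hdet, abs_div, abs_two, triArea]

theorem triArea_midpoint_right (A B C : ℝ²) :
    triArea B C (midpoint ℝ A C) = triArea A B C / 2 := by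
  have hdet : det2 (C - B) (midpoint ℝ A C - B) = det2 (B - A) (C - A) / 2 := by
    simp only [det2, PiLp.sub_apply, EuclideanSpace.midpoint_apply]; ring
  rw [triArea, hdet, abs_div, abs_two, triArea]

theorem triArea_eq_of_midpoint_mem_line {A B C D : ℝ²}
    (h : midpoint ℝ B D ∈ line[ℝ, A, C]) : triArea A C D = triArea A B C := by
  obtain ⟨t, ht⟩ := mem_affineSpan_pair_iff_exists_lineMap_eq.1 h
  have h0 := congrArg (· 0) ht
  have h1 := congrArg (· 1) ht
  simp only [AffineMap.lineMap_apply_module, EuclideanSpace.midpoint_apply, PiLp.add_apply,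
    PiLp.smul_apply, smul_eq_mul] at h0 h1
  simp only [triArea, det2, PiLp.sub_apply]
  congr 2
  linear_combination (2 * (C 1 - A 1)) * h0 - (2 * (C 0 - A 0)) * h1

/-- **Equal-area splitting of a quadrilateral.**
Let `Q = ABCD` be a simple quadrilateral in `ℝ²` (decomposed by the diagonal `AC` into
triangles `ABC` and `ACD`) such that `AC` passes through the midpoint `E` of the diagonal
`BD`.  Then the midpoint `p` of `AC` makes the four triangles `ABp`, `BCp`, `CDp`, `DAp`
have equal areas, each equal to a quarter of the area of `Q`. -/
theorem quadrilateral_equal_triangle_areas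
    (A B C D : EuclideanSpace ℝ (Fin 2))
    (hsimple : volume (convexHull ℝ {A, B, C} ∩ convexHull ℝ {A, C, D}) = 0)
    (hE : midpoint ℝ B D ∈ segment ℝ A C)
    (p : EuclideanSpace ℝ (Fin 2)) (hp : p = midpoint ℝ A C) :
    triArea A B p = (volume (convexHull ℝ {A, B, C} ∪ convexHull ℝ {A, C, D})).toReal / 4 ∧
    triArea B C p = (volume (convexHull ℝ {A, B, C} ∪ convexHull ℝ {A, C, D})).toReal / 4 ∧
    triArea C D p = (volume (convexHull ℝ {A, B, C} ∪ convexHull ℝ {A, C, D})).toReal / 4 ∧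
    triArea D A p = (volume (convexHull ℝ {A, B, C} ∪ convexHull ℝ {A, C, D})).toReal / 4 := by
  subst hp
  have hACD : triArea A C D = triArea A B C :=
    triArea_eq_of_midpoint_mem_line (mem_segment_iff_wbtw.1 hE).mem_affineSpan
  have hQ : (volume (convexHull ℝ {A, B, C} ∪ convexHull ℝ {A, C, D})).toReal =
      2 * triArea A B C := by
    rw [measure_union₀ ((convex_convexHull ℝ _).nullMeasurableSet (μ := volume)) hsimple,
      volume_convexHull_triangle, volume_convexHull_triangle,
      ← ENNReal.ofReal_add (triArea_nonneg A B C) (triArea_nonneg A C D),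
      ENNReal.toReal_ofReal (add_nonneg (triArea_nonneg A B C) (triArea_nonneg A C D)), hACD,
      two_mul]
  rw [hQ]
  refine ⟨?_, ?_, ?_, ?_⟩
  · rw [triArea_midpoint_left]; ring
  · rw [triArea_midpoint_right]; ring
  · rw [midpoint_comm, triArea_midpoint_left, triArea_rotate, hACD]; ring
  · rw [midpoint_comm, triArea_midpoint_right, triArea_rotate, hACD]; ring
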